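/- Let R be a commutative Artinian ring with unit and let G be an abelian group in which every element has finite order (equivalently, G is locally finite abelian), such that the order of every element of G is invertible in R/J(R), where J(R) is the Jacobson radical of R. Then every nonzero RG-module has a maximal proper submodule; that is, the group algebra RG is a left max ring. -/

import Mathlib

/-!
The Jacobson radical `J` of an Artinian ring is nilpotent and `R/J` is semisimple. The kernel
`I` of `RG → (R/J)G` is then nilpotent too, so `M/IM ≠ 0` for every nonzero module `M`, and
it suffices to find a maximal submodule of `M/IM` over `(R/J)G`. Every element of `(R/J)G`
lies in `(R/J)H` for a finite subgroup `H`, which is semisimple by Maschke's averaging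
argument, so `(R/J)G` is von Neumann regular. Over a commutative von Neumann regular ring,
every element of `PM` is fixed by some `e ∈ P`; hence if `P` is a maximal ideal containing the
annihilator of `m ≠ 0`, then `m ∉ PM`, and `M/PM` is a nonzero vector space over `R/P`.
-/

universe v

open MonoidAlgebra

def IsVonNeumannRegular (R : Type*) [Mul R] : Prop :=
  ∀ a : R, ∃ b, a * b * a = a

def IsLeftMaxRing.{w, u} (R : Type u) [Ring R] : Prop :=
  ∀ (M : Type w) [AddCommGroup M] [Module R M], Nontrivial M → ∃ N : Submodule R M, IsCoatom N

namespace IsVonNeumannRegular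

theorem of_surjective {R S F : Type*} [Mul R] [Mul S] [FunLike F R S] [MulHomClass F R S]
    (f : F) (hf : Function.Surjective f) (hR : IsVonNeumannRegular R) :
    IsVonNeumannRegular S := by
  intro s
  obtain ⟨a, rfl⟩ := hf s
  obtain ⟨b, hb⟩ := hR a
  exact ⟨f b, by rw [← map_mul, ← map_mul, hb]⟩

theorem exists_mem_smul_eq_self {R M : Type*} [CommRing R] [AddCommGroup M] [Module R M]
    (hR : IsVonNeumannRegular R) {P : Ideal R} {N : Submodule R M} {x : M} (hx : x ∈ P • N) :
    ∃ e ∈ P, e • x = x := by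
  refine Submodule.smul_induction_on hx (fun a ha n _ => ?_)
    fun x y ⟨e, he, hex⟩ ⟨f, hf, hfy⟩ => ?_
  · obtain ⟨b, hb⟩ := hR a
    exact ⟨a * b, P.mul_mem_right b ha, by rw [smul_smul, hb]⟩
  · refine ⟨e + f - f * e, P.sub_mem (P.add_mem he hf) (P.mul_mem_left f he), ?_⟩
    linear_combination (norm := module) (1 - f) • hex + (1 - e) • hfy

end IsVonNeumannRegular

theorem IsSemisimpleRing.isVonNeumannRegular (R : Type*) [CommRing R] [IsSemisimpleRing R] :
    IsVonNeumannRegular R := by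
  intro a
  obtain ⟨e, he, hspan⟩ := IsSemisimpleRing.ideal_eq_span_idempotent (Ideal.span {a})
  obtain ⟨c, rfl⟩ := Ideal.mem_span_singleton'.1 (hspan ▸ Ideal.mem_span_singleton_self a)
  obtain ⟨b, hb⟩ := Ideal.mem_span_singleton'.1 (hspan ▸ Ideal.mem_span_singleton_self e)
  exact ⟨b, by rw [mul_comm (c * e) b, hb, mul_comm, mul_assoc, he.eq]⟩

namespace Submodule

variable {R M : Type*} [CommRing R] [AddCommGroup M] [Module R M]

theorem isCoatom_comap_mkQ {p : Submodule R M} {N : Submodule R (M ⧸ p)} (hN : IsCoatom N) :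
    IsCoatom (N.comap p.mkQ) := by
  have := isSimpleModule_iff_isCoatom.2 hN
  simpa [LinearMap.ker_comp] using LinearMap.isCoatom_ker_of_surjective (f := N.mkQ ∘ₗ p.mkQ)
    (N.mkQ_surjective.comp p.mkQ_surjective)

theorem exists_isCoatom_of_quotient_smul_top {I : Ideal R}
    (h : ∃ N : Submodule (R ⧸ I) (M ⧸ I • (⊤ : Submodule R M)), IsCoatom N) :
    ∃ N : Submodule R M, IsCoatom N := by
  obtain ⟨N, hN⟩ := h
  let e := orderIsoOfAlgebraMapSurjective (R := R) (S := R ⧸ I)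
    (M := M ⧸ I • (⊤ : Submodule R M)) Ideal.Quotient.mk_surjective
  exact ⟨_, isCoatom_comap_mkQ ((e.isCoatom_iff N).2 hN)⟩

theorem smul_top_ne_top_of_isNilpotent [Nontrivial M] {I : Ideal R} (hI : IsNilpotent I) :
    I • (⊤ : Submodule R M) ≠ ⊤ := by
  obtain ⟨n, hn⟩ := hI
  intro h
  have hpow : ∀ k : ℕ, I ^ k • (⊤ : Submodule R M) = ⊤ := fun k => by
    induction k with
    | zero => rw [pow_zero, Ideal.one_eq_top, top_smul]
    | succ k ih => rw [pow_succ, mul_smul, h, ih]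
  exact bot_ne_top (by rw [← hpow n, hn, Ideal.zero_eq_bot, bot_smul])

end Submodule

theorem IsVonNeumannRegular.isLeftMaxRing {R : Type*} [CommRing R] (hR : IsVonNeumannRegular R) :
    IsLeftMaxRing.{v} R := by
  intro M _ _ _
  obtain ⟨m, hm⟩ := exists_ne (0 : M)
  obtain ⟨P, hP, hAnnP⟩ := Ideal.exists_le_maximal (Submodule.span R {m}).annihilator
    (by rwa [Ne, Submodule.annihilator_eq_top_iff, Submodule.span_singleton_eq_bot])
  have hmP : m ∉ P • (⊤ : Submodule R M) := fun hmem => by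
    obtain ⟨e, heP, hem⟩ := hR.exists_mem_smul_eq_self hmem
    have h1e : 1 - e ∈ P := hAnnP <| by
      rw [Submodule.mem_annihilator_span_singleton, sub_smul, one_smul, hem, sub_self]
    exact hP.ne_top ((Ideal.eq_top_iff_one P).2 (by simpa using P.add_mem h1e heP))
  let := Ideal.Quotient.field P
  have : Nontrivial (M ⧸ P • (⊤ : Submodule R M)) :=
    Submodule.Quotient.nontrivial_iff.2 fun h => hmP (by rw [h]; exact Submodule.mem_top)
  exact Submodule.exists_isCoatom_of_quotient_smul_top (I := P) (IsCoatomic.exists_coatom _)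

theorem IsLeftMaxRing.of_isNilpotent_of_quotient {R : Type*} [CommRing R] {I : Ideal R}
    (hI : IsNilpotent I) (h : IsLeftMaxRing.{v} (R ⧸ I)) : IsLeftMaxRing.{v} R := by
  intro M _ _ _
  have : Nontrivial (M ⧸ I • (⊤ : Submodule R M)) :=
    Submodule.Quotient.nontrivial_iff.2 (Submodule.smul_top_ne_top_of_isNilpotent hI)
  exact Submodule.exists_isCoatom_of_quotient_smul_top (h _ this)

theorem isUnit_natCard_of_isUnit_orderOf {k G : Type*} [CommRing k] [CommGroup G] [Finite G]
    (h : ∀ g : G, IsUnit (orderOf g : k)) : IsUnit (Nat.card G : k) := by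
  obtain ⟨g, hg⟩ := Monoid.exists_orderOf_eq_exponent (G := G) .of_finite
  refine isUnit_of_dvd_unit (Nat.cast_dvd_cast (card_dvd_exponent_pow_rank G)) ?_
  rw [Nat.cast_pow, ← hg]
  exact (h g).pow _

namespace MonoidAlgebra

theorem isSemisimpleRing_of_isUnit_natCard {k G : Type*} [CommRing k] [IsSemisimpleRing k]
    [Group G] [Fintype G] (hG : IsUnit (Nat.card G : k)) : IsSemisimpleRing k[G] where
  exists_isCompl p := by
    obtain ⟨q, hq⟩ := exists_isCompl (p.restrictScalars k)
    let π : k[G] →ₗ[k] p := (p.restrictScalars k).projectionOnto q hq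
    refine ⟨LinearMap.ker (π.equivariantProjection G), LinearMap.isCompl_of_proj fun x => ?_⟩
    exact π.equivariantProjection_condition G p.subtype hG
      (Submodule.projectionOnto_apply_left hq) x

theorem isVonNeumannRegular {k G : Type*} [CommRing k] [IsSemisimpleRing k] [CommGroup G]
    (hG : IsMulTorsion G) (hk : ∀ g : G, IsUnit (orderOf g : k)) :
    IsVonNeumannRegular k[G] := by
  intro x
  let H := Subgroup.closure (x.coeff.support : Set G)
  have := CommGroup.finite_of_fg_isMulTorsion H (hG.subgroup H)
  let := Fintype.ofFinite H
  have := isSemisimpleRing_of_isUnit_natCard (k := k) <|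
    isUnit_natCard_of_isUnit_orderOf fun g : H => Subgroup.orderOf_coe g ▸ hk g
  let ψ := mapDomainRingHom k H.subtype
  have hx : ψ (comapDomain _ Subtype.val_injective x) = x :=
    mapDomain_comapDomain (by simp [H, Subgroup.subset_closure]) _
  obtain ⟨y, hy⟩ :=
    IsSemisimpleRing.isVonNeumannRegular k[H] (comapDomain _ Subtype.val_injective x)
  exact ⟨ψ y, by rw [← hx, ← map_mul, ← map_mul, hy]⟩

theorem mem_map_algebraMap_of_forall_coeff_mem {R G : Type*} [CommRing R] [CommMonoid G]
    {I : Ideal R} {x : R[G]} (hx : ∀ g, x.coeff g ∈ I) : x ∈ I.map (algebraMap R R[G]) := by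
  rw [← x.sum_coeff_single]
  refine Ideal.sum_mem _ fun g _ => ?_
  rw [single_eq_algebraMap_mul_of]
  exact Ideal.mul_mem_right _ _ (Ideal.mem_map_of_mem _ (hx g))

theorem isNilpotent_ker_mapRingHom {R G : Type*} [CommRing R] [CommMonoid G] {I : Ideal R}
    (hI : IsNilpotent I) : IsNilpotent (RingHom.ker (mapRingHom G (Ideal.Quotient.mk I))) := by
  obtain ⟨n, hn⟩ := hI
  have hker : RingHom.ker (mapRingHom G (Ideal.Quotient.mk I)) ≤ I.map (algebraMap R R[G]) :=
    fun x hx => mem_map_algebraMap_of_forall_coeff_mem fun g =>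
      Ideal.Quotient.eq_zero_iff_mem.1 <| by
        simpa using congr_arg (·.coeff g) (RingHom.mem_ker.1 hx)
  refine ⟨n, le_bot_iff.1 ?_⟩
  calc _ ≤ I.map (algebraMap R R[G]) ^ n := Ideal.pow_right_mono hker n
    _ = ⊥ := by rw [← Ideal.map_pow, hn, Ideal.zero_eq_bot, Ideal.map_bot]

theorem isLeftMaxRing_of_isMulTorsion {R G : Type*} [CommRing R] [IsSemiprimaryRing R]
    [CommGroup G] (hG : IsMulTorsion G) (hR : ∀ g : G, IsUnit (orderOf g : R ⧸ Ring.jacobson R)) :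
    IsLeftMaxRing.{v} R[G] := by
  let φ := mapRingHom G (Ideal.Quotient.mk (Ring.jacobson R))
  have hφ : Function.Surjective φ := map_surjective _ Ideal.Quotient.mk_surjective
  refine IsLeftMaxRing.of_isNilpotent_of_quotient
    (isNilpotent_ker_mapRingHom IsSemiprimaryRing.isNilpotent) ?_
  exact ((isVonNeumannRegular hG hR).of_surjective (RingHom.quotientKerEquivOfSurjective hφ).symm
    (RingEquiv.surjective _)).isLeftMaxRing

end MonoidAlgebra

/-- Let `R` be a commutative Artinian ring and `G` an abelian group in which every
element has finite order, such that the order of every element of `G` is invertible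
in `R/J(R)`.  Then every nonzero module over the group algebra `RG` has a maximal
proper submodule, i.e. `RG` is a left max ring. -/
theorem monoidAlgebra_isLeftMaxRing_of_locallyFinite_abelian
    (R : Type*) [CommRing R] [IsArtinianRing R]
    (G : Type*) [CommGroup G]
    (hfin : ∀ g : G, IsOfFinOrder g)
    (hinv : ∀ g : G, IsUnit ((orderOf g : ℕ) : R ⧸ (⊥ : Ideal R).jacobson)) :
    ∀ (M : Type v) [AddCommGroup M] [Module (MonoidAlgebra R G) M],
      Nontrivial M → ∃ N : Submodule (MonoidAlgebra R G) M, IsCoatom N := by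
  rw [Ideal.jacobson_bot] at hinv
  exact MonoidAlgebra.isLeftMaxRing_of_isMulTorsion hfin hinv
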